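/- Let X be a real m×n matrix with observed entries indexed by Ω, let λ ≥ 0, and define F(A,B) := (1/2)‖P_Ω(X − ABᵀ)‖_F² + (λ/2)(‖A‖_F² + ‖B‖_F²) and Q_A(Z₁|A,B) := (1/2)‖P_Ω(X − Z₁Bᵀ) + P_Ω^⊥(ABᵀ − Z₁Bᵀ)‖_F² + (λ/2)‖Z₁‖_F² + (λ/2)‖B‖_F², Q_B(Z₂|A,B) := (1/2)‖P_Ω(X − AZ₂ᵀ) + P_Ω^⊥(ABᵀ − AZ₂ᵀ)‖_F² + (λ/2)‖A‖_F² + (λ/2)‖Z₂‖_F². Then for all m×r matrices Z₁ and n×r matrices Z₂: Q_A(Z₁|A,B) ≥ F(Z₁,B) and Q_B(Z₂|A,B) ≥ F(A,Z₂), with equalities Q_A(A|A,B) = F(A,B) = Q_B(B|A,B). -/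
import Mathlib


noncomputable section

open Matrix Filter

/-- Squared Frobenius norm of a real matrix. -/
def frobSq {m n : ℕ} (M : Matrix (Fin m) (Fin n) ℝ) : ℝ := ∑ i, ∑ j, (M i j) ^ 2

/-- `P_Ω`: keep the entries in `Ω`, zero out the rest. -/
def proj {m n : ℕ} (Ω : Finset (Fin m × Fin n)) (Y : Matrix (Fin m) (Fin n) ℝ) :
    Matrix (Fin m) (Fin n) ℝ := Matrix.of fun i j => if (i, j) ∈ Ω then Y i j else 0

/-- `P_Ω^⊥`: zero out the entries in `Ω`, keep the rest. -/
def projPerp {m n : ℕ} (Ω : Finset (Fin m × Fin n)) (Y : Matrix (Fin m) (Fin n) ℝ) :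
    Matrix (Fin m) (Fin n) ℝ := Matrix.of fun i j => if (i, j) ∈ Ω then 0 else Y i j

/-- `F(A,B) = (1/2)‖P_Ω(X − ABᵀ)‖_F² + (λ/2)(‖A‖_F² + ‖B‖_F²)`. -/
def Fobj {m n r : ℕ} (Ω : Finset (Fin m × Fin n)) (X : Matrix (Fin m) (Fin n) ℝ) (lam : ℝ)
    (A : Matrix (Fin m) (Fin r) ℝ) (B : Matrix (Fin n) (Fin r) ℝ) : ℝ :=
  (1 / 2) * frobSq (proj Ω (X - A * Bᵀ)) + (lam / 2) * (frobSq A + frobSq B)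

/-- `Q_A(Z₁|A,B)`. -/
def QA {m n r : ℕ} (Ω : Finset (Fin m × Fin n)) (X : Matrix (Fin m) (Fin n) ℝ) (lam : ℝ)
    (Z₁ : Matrix (Fin m) (Fin r) ℝ) (A : Matrix (Fin m) (Fin r) ℝ)
    (B : Matrix (Fin n) (Fin r) ℝ) : ℝ :=
  (1 / 2) * frobSq (proj Ω (X - Z₁ * Bᵀ) + projPerp Ω (A * Bᵀ - Z₁ * Bᵀ)) +
    (lam / 2) * frobSq Z₁ + (lam / 2) * frobSq B

/-- `Q_B(Z₂|A,B)`. -/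
def QB {m n r : ℕ} (Ω : Finset (Fin m × Fin n)) (X : Matrix (Fin m) (Fin n) ℝ) (lam : ℝ)
    (Z₂ : Matrix (Fin n) (Fin r) ℝ) (A : Matrix (Fin m) (Fin r) ℝ)
    (B : Matrix (Fin n) (Fin r) ℝ) : ℝ :=
  (1 / 2) * frobSq (proj Ω (X - A * Z₂ᵀ) + projPerp Ω (A * Bᵀ - A * Z₂ᵀ)) +
    (lam / 2) * frobSq A + (lam / 2) * frobSq Z₂

/-- `(A_k, B_k)` are softImpute-ALS iterates: `A_{k+1} ∈ argmin Q_A(·|A_k,B_k)` and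
`B_{k+1} ∈ argmin Q_B(·|A_{k+1},B_k)`. -/
def SoftImputeALS {m n r : ℕ} (Ω : Finset (Fin m × Fin n)) (X : Matrix (Fin m) (Fin n) ℝ)
    (lam : ℝ) (A : ℕ → Matrix (Fin m) (Fin r) ℝ) (B : ℕ → Matrix (Fin n) (Fin r) ℝ) : Prop :=
  ∀ k : ℕ,
    (∀ Z₁ : Matrix (Fin m) (Fin r) ℝ,
      QA Ω X lam (A (k + 1)) (A k) (B k) ≤ QA Ω X lam Z₁ (A k) (B k)) ∧
    (∀ Z₂ : Matrix (Fin n) (Fin r) ℝ,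
      QB Ω X lam (B (k + 1)) (A (k + 1)) (B k) ≤ QB Ω X lam Z₂ (A (k + 1)) (B k))

lemma frobSq_proj_add_projPerp {m n : ℕ} (Ω : Finset (Fin m × Fin n))
    (M N : Matrix (Fin m) (Fin n) ℝ) :
    frobSq (proj Ω M + projPerp Ω N) = frobSq (proj Ω M) + frobSq (projPerp Ω N) := by
  simp only [frobSq, proj, projPerp, Matrix.add_apply, Matrix.of_apply, ← Finset.sum_add_distrib]
  refine Finset.sum_congr rfl fun i _ => Finset.sum_congr rfl fun j _ => ?_
  by_cases h : (i, j) ∈ Ω <;> simp [h]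

lemma frobSq_nonneg {m n : ℕ} (M : Matrix (Fin m) (Fin n) ℝ) : 0 ≤ frobSq M :=
  Finset.sum_nonneg fun _ _ => Finset.sum_nonneg fun _ _ => sq_nonneg _

theorem QA_QB_majorize_F {m n r : ℕ} (Ω : Finset (Fin m × Fin n))
    (X : Matrix (Fin m) (Fin n) ℝ) (lam : ℝ)
    (A : Matrix (Fin m) (Fin r) ℝ) (B : Matrix (Fin n) (Fin r) ℝ) :
    (∀ Z₁ : Matrix (Fin m) (Fin r) ℝ, QA Ω X lam Z₁ A B ≥ Fobj Ω X lam Z₁ B) ∧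
    (∀ Z₂ : Matrix (Fin n) (Fin r) ℝ, QB Ω X lam Z₂ A B ≥ Fobj Ω X lam A Z₂) ∧
    QA Ω X lam A A B = Fobj Ω X lam A B ∧
    QB Ω X lam B A B = Fobj Ω X lam A B := by
  refine ⟨fun Z₁ => ?_, fun Z₂ => ?_, ?_, ?_⟩
  · simp only [QA, Fobj, frobSq_proj_add_projPerp]
    nlinarith [frobSq_nonneg (projPerp Ω (A * Bᵀ - Z₁ * Bᵀ))]
  · simp only [QB, Fobj, frobSq_proj_add_projPerp]
    nlinarith [frobSq_nonneg (projPerp Ω (A * Bᵀ - A * Z₂ᵀ))]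
  · simp only [QA, Fobj, sub_self]
    have : projPerp Ω (0 : Matrix (Fin m) (Fin n) ℝ) = 0 := by
      ext i j; simp [projPerp]
    rw [this, add_zero]; ring
  · simp only [QB, Fobj, sub_self]
    have : projPerp Ω (0 : Matrix (Fin m) (Fin n) ℝ) = 0 := by
      ext i j; simp [projPerp]
    rw [this, add_zero]; ring


end
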